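/- arXiv:1404.5934 — 8 statements merged into one kernel-verified Lean document; each statement's English description precedes it below -/
import Mathlib

section
/- Let H be a complex Hilbert space and let B, R be bounded positive operators on H with R ≥ 1 (i.e. R - 1 is positive). If B R B = R, then B = 1. -/
/-!
Put `s = √r`. The element `c = s b s` is positive and `c² = s (b r b) s = s r s = r²`, so `c = r = s²`
by uniqueness of positive square roots. As `r` is invertible so is `s`; cancelling `s` on both sides
of `s b s = s s` gives `b = 1`. This works in any C⋆-algebra; operators with `R ≥ 1` are invertible.
-/

namespace CStarAlgebra

variable {A : Type*} [CStarAlgebra A] [PartialOrder A] [StarOrderedRing A]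

theorem sqrt_mul_mul_sqrt_eq_of_mul_mul_eq {b r : A} (hb : 0 ≤ b) (hr : 0 ≤ r)
    (h : b * r * b = r) : CFC.sqrt r * b * CFC.sqrt r = r := by
  set s := CFC.sqrt r
  have hss : s * s = r := CFC.sqrt_mul_sqrt_self r
  have hsq : (s * b * s) * (s * b * s) = r * r := by
    calc (s * b * s) * (s * b * s) = s * (b * (s * s) * b) * s := by noncomm_ring
      _ = (s * s) * (s * s) := by rw [hss, h, ← hss]; noncomm_ring
      _ = r * r := by rw [hss]
  calc s * b * s = CFC.sqrt (r * r) :=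
        (CFC.sqrt_unique hsq (CFC.sqrt_nonneg r |>.isSelfAdjoint.conjugate_nonneg hb)).symm
    _ = r := CFC.sqrt_mul_self r

theorem eq_one_of_mul_mul_eq {b r : A} (hb : 0 ≤ b) (hr : 0 ≤ r) (hr_unit : IsUnit r)
    (h : b * r * b = r) : b = 1 := by
  have hs : IsUnit (CFC.sqrt r) := (CFC.isUnit_sqrt_iff r).mpr hr_unit
  apply hs.mul_right_cancel
  apply hs.mul_left_cancel
  rw [← mul_assoc, sqrt_mul_mul_sqrt_eq_of_mul_mul_eq hb hr h, one_mul, CFC.sqrt_mul_sqrt_self r]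

end CStarAlgebra

/-- If `B, R` are bounded positive operators on a complex Hilbert space with `R ≥ 1`
(i.e. `R - 1` is positive) and `B R B = R`, then `B = 1`. -/
theorem stmt0 {H : Type*} [NormedAddCommGroup H] [InnerProductSpace ℂ H] [CompleteSpace H]
    (B R : H →L[ℂ] H) (hB : B.IsPositive) (hR : R.IsPositive)
    (hR1 : (R - 1).IsPositive) (h : B ∘L R ∘L B = R) : B = 1 := by
  rw [← ContinuousLinearMap.nonneg_iff_isPositive] at hB hR hR1
  exact CStarAlgebra.eq_one_of_mul_mul_eq hB hR (CStarAlgebra.isUnit_of_le 1 (sub_nonneg.mp hR1))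
    (by rw [mul_assoc]; exact h)
end

section
/- Let B, R be bounded positive operators on a complex Hilbert space with R ≥ 1 and BRB = R. Then B is invertible and R⁻¹BR = RBR⁻¹ = B⁻¹, and consequently the spectrum of B satisfies σ(B) = σ(B)⁻¹ = σ(B⁻¹). -/
/-!
Since `R ≥ 1`, `R` is invertible, and `B R B = R` exhibits `R⁻¹ B R` as a left inverse and
`R B R⁻¹` as a right inverse of `B`. Hence both equal `B⁻¹`, so `B⁻¹` is similar to `B` and has
the same spectrum, while `σ(B⁻¹) = σ(B)⁻¹` holds for every invertible element.
-/

section Monoid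

variable {M : Type*} [Monoid M] {b : M} {u : Mˣ}

theorem units_inv_mul_mul_mul_eq_one_of_mul_mul_eq (h : b * u * b = u) :
    ↑u⁻¹ * b * u * b = 1 := by
  rw [mul_assoc _ b, mul_assoc, h, Units.inv_mul]

theorem mul_units_mul_mul_inv_eq_one_of_mul_mul_eq (h : b * u * b = u) :
    b * (u * b * ↑u⁻¹) = 1 := by
  rw [← mul_assoc, ← mul_assoc, h, Units.mul_inv]

theorem units_inv_mul_mul_eq_mul_mul_inv_of_mul_mul_eq (h : b * u * b = u) :
    ↑u⁻¹ * b * u = u * b * ↑u⁻¹ :=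
  left_inv_eq_right_inv (units_inv_mul_mul_mul_eq_one_of_mul_mul_eq h)
    (mul_units_mul_mul_inv_eq_one_of_mul_mul_eq h)

theorem isUnit_of_mul_units_mul_eq (h : b * u * b = u) : IsUnit b :=
  ⟨⟨b, u * b * ↑u⁻¹, mul_units_mul_mul_inv_eq_one_of_mul_mul_eq h, by
    rw [← units_inv_mul_mul_eq_mul_mul_inv_of_mul_mul_eq h]
    exact units_inv_mul_mul_mul_eq_one_of_mul_mul_eq h⟩, rfl⟩

end Monoid

section MonoidWithZero

variable {M₀ : Type*} [MonoidWithZero M₀] {b : M₀} {u : M₀ˣ}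

theorem Ring.inverse_eq_units_inv_mul_mul_of_mul_mul_eq (h : b * u * b = u) :
    Ring.inverse b = ↑u⁻¹ * b * u := by
  rw [units_inv_mul_mul_eq_mul_mul_inv_of_mul_mul_eq h]
  simpa [mul_units_mul_mul_inv_eq_one_of_mul_mul_eq h] using
    Ring.inverse_mul_cancel_left b (u * b * ↑u⁻¹) (isUnit_of_mul_units_mul_eq h)

theorem Ring.inverse_eq_units_mul_mul_inv_of_mul_mul_eq (h : b * u * b = u) :
    Ring.inverse b = u * b * ↑u⁻¹ := by
  rw [Ring.inverse_eq_units_inv_mul_mul_of_mul_mul_eq h,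
    units_inv_mul_mul_eq_mul_mul_inv_of_mul_mul_eq h]

end MonoidWithZero

theorem spectrum.inv_eq_spectrum_inverse {𝕜 A : Type*} [Field 𝕜] [Ring A] [Algebra 𝕜 A] {a : A}
    (ha : IsUnit a) : (spectrum 𝕜 a)⁻¹ = spectrum 𝕜 (Ring.inverse a) := by
  obtain ⟨u, rfl⟩ := ha
  rw [Ring.inverse_unit, spectrum.map_inv]

theorem ContinuousLinearMap.isUnit_of_isPositive_sub_one {H : Type*} [NormedAddCommGroup H]
    [InnerProductSpace ℂ H] [CompleteSpace H] {T : H →L[ℂ] H} (hT : (T - 1).IsPositive) :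
    IsUnit T :=
  CStarAlgebra.isUnit_of_le 1 ((ContinuousLinearMap.le_def 1 T).mpr hT) isStrictlyPositive_one

theorem stmt1_general {H : Type*} [NormedAddCommGroup H] [InnerProductSpace ℂ H] [CompleteSpace H]
    (B R : H →L[ℂ] H)
    (hR1 : (R - 1).IsPositive) (h : B * R * B = R) :
    IsUnit B ∧
    Ring.inverse R * B * R = Ring.inverse B ∧
    R * B * Ring.inverse R = Ring.inverse B ∧
    spectrum ℂ B = (spectrum ℂ B)⁻¹ ∧
    spectrum ℂ B = spectrum ℂ (Ring.inverse B) := by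
  obtain ⟨u, rfl⟩ := ContinuousLinearMap.isUnit_of_isPositive_sub_one hR1
  have hB : IsUnit B := isUnit_of_mul_units_mul_eq h
  have hσ : spectrum ℂ (Ring.inverse B) = spectrum ℂ B := by
    rw [Ring.inverse_eq_units_inv_mul_mul_of_mul_mul_eq h, spectrum.units_conjugate']
  refine ⟨hB, ?_, ?_, ?_, hσ.symm⟩
  · rw [Ring.inverse_unit, Ring.inverse_eq_units_inv_mul_mul_of_mul_mul_eq h]
  · rw [Ring.inverse_unit, Ring.inverse_eq_units_mul_mul_inv_of_mul_mul_eq h]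
  · rw [spectrum.inv_eq_spectrum_inverse hB, hσ]

/-- If `B, R` are bounded positive operators on a complex Hilbert space with `R ≥ 1` and
`B R B = R`, then `B` is invertible, `R⁻¹ B R = R B R⁻¹ = B⁻¹`, and the spectrum of `B`
satisfies `σ(B) = σ(B)⁻¹ = σ(B⁻¹)`. -/
theorem stmt1 {H : Type*} [NormedAddCommGroup H] [InnerProductSpace ℂ H] [CompleteSpace H]
    (B R : H →L[ℂ] H) (hB : B.IsPositive) (hR : R.IsPositive)
    (hR1 : (R - 1).IsPositive) (h : B * R * B = R) :
    IsUnit B ∧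
    Ring.inverse R * B * R = Ring.inverse B ∧
    R * B * Ring.inverse R = Ring.inverse B ∧
    spectrum ℂ B = (spectrum ℂ B)⁻¹ ∧
    spectrum ℂ B = spectrum ℂ (Ring.inverse B) :=
  stmt1_general B R hR1 h
end

section
/- Let X and Y be closed densely defined operators on Hilbert spaces which are diagonalizable, i.e. X = Σᵢ λᵢ Pᵢ and Y = Σⱼ μⱼ Qⱼ for families of mutually orthogonal projections {Pᵢ} and {Qⱼ} summing to the identity and scalars λᵢ, μⱼ. Then the spectrum of the tensor product operator X ⊗ Y equals the closure of the set {λμ : λ ∈ σ(X), μ ∈ σ(Y)}. -/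
open scoped Pointwise ENNReal

/-!
With respect to a Hilbert basis, the spectrum of a diagonal operator `T bᵢ = cᵢ bᵢ` is the
closure of its eigenvalues: each `cᵢ` lies in the spectrum, and if `z` stays at distance `ε > 0`
from all of them, then multiplying the coordinates by `(z - cᵢ)⁻¹`, which are bounded by `ε⁻¹`,
inverts `z - T`. Applied to `X`, `Y` and `X ⊗ Y`, the theorem becomes
`closure (range (λ * μ)) = closure (closure (range λ) * closure (range μ))`,
which holds by continuity of multiplication.
-/

namespace lp

variable {𝕜 ι : Type*} {E : ι → Type*} [NormedField 𝕜] [∀ i, NormedAddCommGroup (E i)]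
  [∀ i, NormedSpace 𝕜 (E i)] {p : ℝ≥0∞}

lemma norm_smul_apply_le (c : lp (fun _ : ι => 𝕜) ∞) (x : lp E p) (i : ι) :
    ‖c i • x i‖ ≤ ‖c‖ * ‖x i‖ :=
  (norm_smul_le _ _).trans <| by gcongr; exact norm_apply_le_norm ENNReal.top_ne_zero c i

noncomputable def diagonal [Fact (1 ≤ p)] (c : lp (fun _ : ι => 𝕜) ∞) : lp E p →L[𝕜] lp E p :=
  LinearMap.mkContinuous
    { toFun x := ⟨fun i => c i • x i,
        ((lp.memℓp x).norm.const_mul ‖c‖).mono (norm_smul_apply_le c x)⟩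
      map_add' x y := lp.ext <| funext fun i => smul_add (c i) (x i) (y i)
      map_smul' a x := lp.ext <| funext fun i => smul_comm (c i) a (x i) }
    ‖c‖
    fun x => by
      have hp : p ≠ 0 := (zero_lt_one.trans_le Fact.out).ne'
      calc _ ≤ ‖‖c‖ • toNorm x‖ := norm_mono hp fun i => by
              simpa [abs_of_nonneg (norm_nonneg c)] using norm_smul_apply_le c x i
        _ = ‖c‖ * ‖x‖ := by rw [norm_const_smul hp, norm_toNorm, norm_norm]

@[simp]
lemma diagonal_apply [Fact (1 ≤ p)] (c : lp (fun _ : ι => 𝕜) ∞) (x : lp E p) (i : ι) :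
    diagonal c x i = c i • x i :=
  rfl

end lp

namespace HilbertBasis

variable {𝕜 ι H : Type*} [RCLike 𝕜] [NormedAddCommGroup H] [InnerProductSpace 𝕜 H]
  (b : HilbertBasis ι 𝕜 H)

theorem ext_continuousLinearMap {F : Type*} [NormedAddCommGroup F] [NormedSpace 𝕜 F]
    {S T : H →L[𝕜] F} (h : ∀ i, S (b i) = T (b i)) : S = T :=
  ContinuousLinearMap.ext_on (Submodule.dense_iff_topologicalClosure_eq_top.mpr b.dense_span)
    (Set.forall_mem_range.mpr h)

noncomputable def diagonal (c : lp (fun _ : ι => 𝕜) ∞) : H →L[𝕜] H :=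
  (b.repr.symm : lp (fun _ : ι => 𝕜) 2 →L[𝕜] H) ∘L lp.diagonal c ∘L
    (b.repr : H →L[𝕜] lp (fun _ : ι => 𝕜) 2)

theorem diagonal_apply_self (c : lp (fun _ : ι => 𝕜) ∞) (i : ι) :
    b.diagonal c (b i) = c i • b i := by
  classical
  have hsingle :
      lp.diagonal c (lp.single (E := fun _ : ι => 𝕜) 2 i 1) = c i • lp.single 2 i 1 := by
    ext j
    by_cases hj : j = i <;> simp [lp.single_apply, hj]
  simp [diagonal, b.repr_self, hsingle, b.repr_symm_single]

theorem isUnit_of_apply_eq_smul {A : H →L[𝕜] H} {d : ι → 𝕜} (hA : ∀ i, A (b i) = d i • b i)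
    {ε : ℝ} (hε : 0 < ε) (hd : ∀ i, ε ≤ ‖d i‖) : IsUnit A := by
  have hd0 (i : ι) : d i ≠ 0 := norm_pos_iff.mp (hε.trans_le (hd i))
  let r : lp (fun _ : ι => 𝕜) ∞ := ⟨fun i => (d i)⁻¹, memℓp_infty ⟨ε⁻¹, by
    rintro _ ⟨i, rfl⟩
    simpa using inv_anti₀ hε (hd i)⟩⟩
  have hr (i : ι) : b.diagonal r (b i) = (d i)⁻¹ • b i := b.diagonal_apply_self r i
  refine ⟨⟨A, b.diagonal r, b.ext_continuousLinearMap fun i => ?_,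
    b.ext_continuousLinearMap fun i => ?_⟩, rfl⟩
  · simp [hr, hA, smul_smul, hd0]
  · simp [hr, hA, smul_smul, hd0]

variable [CompleteSpace H]

theorem spectrum_eq_closure_range {T : H →L[𝕜] H} {c : ι → 𝕜}
    (hT : ∀ i, T (b i) = c i • b i) : spectrum 𝕜 T = closure (Set.range c) := by
  refine subset_antisymm (fun z hz => ?_) (closure_minimal ?_ (spectrum.isClosed T))
  · by_contra hzc
    obtain ⟨ε, hε, hfar⟩ : ∃ ε > 0, ∀ w ∈ Set.range c, ε ≤ dist z w := by
      simpa [Metric.mem_closure_iff] using hzc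
    refine hz (b.isUnit_of_apply_eq_smul (d := fun i => z - c i) (fun i => ?_) hε
      fun i => dist_eq_norm z (c i) ▸ hfar _ ⟨i, rfl⟩)
    simp [hT, Algebra.algebraMap_eq_smul_one, sub_smul]
  · rintro _ ⟨i, rfl⟩
    rw [ContinuousLinearMap.spectrum_eq]
    exact Module.End.hasEigenvalue_of_hasEigenvector
      ⟨Module.End.mem_eigenspace_iff.mpr (hT i), b.orthonormal.ne_zero i⟩ |>.mem_spectrum

end HilbertBasis

theorem closure_closure_mul_closure {M : Type*} [TopologicalSpace M] [Mul M] [ContinuousMul M]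
    (s t : Set M) : closure (closure s * closure t) = closure (s * t) := by
  refine subset_antisymm (closure_minimal ?_ isClosed_closure)
    (closure_mono (Set.mul_subset_mul subset_closure subset_closure))
  rintro _ ⟨a, ha, b, hb, rfl⟩
  exact map_mem_closure₂ continuous_mul ha hb fun x hx y hy => Set.mul_mem_mul hx hy

/-- If `X`, `Y`, and `Z` are (bounded) diagonalizable operators, diagonalized by Hilbert
bases `e : ι → H`, `f : κ → K` and `g : ι × κ → L` with eigenvalues `λ i`, `μ j`, and
`λ i * μ j` respectively (so that `Z` is a model for the tensor product operator `X ⊗ Y`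
on the Hilbert space tensor product `L = H ⊗ K`), then the spectrum of `X ⊗ Y` equals the
closure of `σ(X)·σ(Y)`. -/
theorem stmt2 {H K L : Type*}
    [NormedAddCommGroup H] [InnerProductSpace ℂ H] [CompleteSpace H]
    [NormedAddCommGroup K] [InnerProductSpace ℂ K] [CompleteSpace K]
    [NormedAddCommGroup L] [InnerProductSpace ℂ L] [CompleteSpace L]
    {ι κ : Type*} (e : HilbertBasis ι ℂ H) (f : HilbertBasis κ ℂ K)
    (g : HilbertBasis (ι × κ) ℂ L)
    (lam : ι → ℂ) (mu : κ → ℂ)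
    (X : H →L[ℂ] H) (Y : K →L[ℂ] K) (Z : L →L[ℂ] L)
    (hX : ∀ i, X (e i) = lam i • e i) (hY : ∀ j, Y (f j) = mu j • f j)
    (hZ : ∀ p : ι × κ, Z (g p) = (lam p.1 * mu p.2) • g p) :
    spectrum ℂ Z = closure (spectrum ℂ X * spectrum ℂ Y) := by
  rw [e.spectrum_eq_closure_range hX, f.spectrum_eq_closure_range hY,
    g.spectrum_eq_closure_range hZ, closure_closure_mul_closure, ← Set.image2_mul,
    Set.image2_range]
end

section
/- Let X be a bounded positive injective operator on L²((0,∞); k) satisfying the Toeplitz condition T_t* X T_t = X for all t ≥ 0, where (T_t) is the right-shift semigroup. Then for each t, the operator √X T_t √X⁻¹ (defined on the range of √X) is isometric, hence extends to an isometry Y_t on L²((0,∞); k), and (Y_t)_{t≥0} is a strongly continuous semigroup of isometries. -/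
/-!
Write `X = S²` with `S = √X` self-adjoint. The Toeplitz condition says `(S Tₜ)* (S Tₜ) = S* S`,
so `‖S (Tₜ f)‖ = ‖S f‖` and `S Tₜ S⁻¹` is isometric on the range of `S`, which is dense since
`S` is self-adjoint and injective. Its continuous extension `Yₜ` inherits the semigroup law from
`Tₜ` by density; strong continuity also passes from the dense range of `S` to all of `H`,
because the `Yₜ` are uniformly Lipschitz.
-/

open ContinuousLinearMap NNReal RCLike
open scoped InnerProductSpace

theorem Equicontinuous.continuous_apply_of_denseRange {ι X α β : Type*} [TopologicalSpace ι]
    [TopologicalSpace X] [UniformSpace α] {F : ι → X → α} (hF : Equicontinuous F)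
    {A : β → X} (hA : DenseRange A) (h : ∀ b, Continuous fun i => F i (A b)) (x : X) :
    Continuous fun i => F i x := by
  refine continuous_iff_continuousAt.2 fun i => ?_
  exact hA.induction_on x (hF.isClosed_setOfPred_tendsto (hF.continuous i))
    fun b => (h b).continuousAt

theorem ContinuousOn.apply_of_denseRange_of_lipschitzWith {ι X α β : Type*} [TopologicalSpace ι]
    [PseudoMetricSpace X] [PseudoMetricSpace α] {s : Set ι} {F : ι → X → α} {K : ℝ≥0}
    (hF : ∀ i ∈ s, LipschitzWith K (F i)) {A : β → X} (hA : DenseRange A)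
    (h : ∀ b, ContinuousOn (fun i => F i (A b)) s) (x : X) :
    ContinuousOn (fun i => F i x) s := by
  simp only [continuousOn_iff_continuous_domRestrict] at h ⊢
  exact (LipschitzWith.uniformEquicontinuous (fun i : s => F i) K fun i => hF i i.2).equicontinuous
    |>.continuous_apply_of_denseRange hA h x

theorem ContinuousLinearMap.ext_of_denseRange {R M N α : Type*} [Semiring R]
    [TopologicalSpace M] [AddCommMonoid M] [Module R M]
    [TopologicalSpace N] [T2Space N] [AddCommMonoid N] [Module R N]
    {A : α → M} (hA : DenseRange A) {Y Z : M →L[R] N} (h : ∀ a, Y (A a) = Z (A a)) : Y = Z :=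
  DFunLike.coe_injective (hA.equalizer Y.continuous Z.continuous (funext h))

namespace ContinuousLinearMap

variable {𝕜 E F : Type*} [RCLike 𝕜] [NormedAddCommGroup E] [InnerProductSpace 𝕜 E]
  [NormedAddCommGroup F] [InnerProductSpace 𝕜 F] [CompleteSpace E] [CompleteSpace F]

theorem denseRange_iff_ker_adjoint_eq_bot (T : E →L[𝕜] F) :
    DenseRange T ↔ (adjoint T).ker = ⊥ := by
  rw [← orthogonal_range, ← Submodule.topologicalClosure_eq_top_iff,
    ← Submodule.dense_iff_topologicalClosure_eq_top, DenseRange, LinearMap.coe_range]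
  rfl

theorem _root_.IsSelfAdjoint.denseRange_of_injective {T : E →L[𝕜] E} (hT : IsSelfAdjoint T)
    (hinj : Function.Injective T) : DenseRange T := by
  rw [denseRange_iff_ker_adjoint_eq_bot, hT.adjoint_eq]
  exact LinearMap.ker_eq_bot.2 hinj

theorem norm_apply_apply_eq_of_adjoint_comp_comp_eq {A : E →L[𝕜] F} {B : E →L[𝕜] E}
    (h : adjoint B ∘L (adjoint A ∘L A) ∘L B = adjoint A ∘L A) (f : E) :
    ‖A (B f)‖ = ‖A f‖ := by
  have hsq : ‖A (B f)‖ ^ 2 = ‖A f‖ ^ 2 :=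
    calc ‖A (B f)‖ ^ 2 = re ⟪(adjoint A ∘L A) (B f), B f⟫_𝕜 :=
          apply_norm_sq_eq_inner_adjoint_left A (B f)
      _ = re ⟪(adjoint B ∘L (adjoint A ∘L A) ∘L B) f, f⟫_𝕜 := by
          rw [comp_apply (adjoint B), adjoint_inner_left]; rfl
      _ = ‖A f‖ ^ 2 := by rw [h, apply_norm_sq_eq_inner_adjoint_left]
  exact (pow_left_inj₀ (norm_nonneg _) (norm_nonneg _) two_ne_zero).1 hsq

end ContinuousLinearMap

namespace LinearMap

variable {𝕜 E F : Type*} [NontriviallyNormedField 𝕜] [AddCommGroup E] [Module 𝕜 E]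
  [NormedAddCommGroup F] [NormedSpace 𝕜 F] [CompleteSpace F]

/-- The continuous extension of `A f ↦ A (B f)` from the range of `A`, i.e. the closure of
`A B A⁻¹`. It is junk unless `A` has dense range and `‖A (B f)‖ ≤ C * ‖A f‖` for some `C`. -/
noncomputable def conjExtend (A : E →ₗ[𝕜] F) (B : E →ₗ[𝕜] E) : F →L[𝕜] F :=
  (A ∘ₗ B).extendOfNorm A

variable {A : E →ₗ[𝕜] F} {B : E →ₗ[𝕜] E}

theorem conjExtend_apply_apply (hA : DenseRange A) (hB : ∀ f, ‖A (B f)‖ = ‖A f‖) (f : E) :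
    conjExtend A B (A f) = A (B f) :=
  extendOfNorm_eq hA ⟨1, fun f => by simp [hB]⟩ f

theorem norm_conjExtend_apply (hA : DenseRange A) (hB : ∀ f, ‖A (B f)‖ = ‖A f‖) (g : F) :
    ‖conjExtend A B g‖ = ‖g‖ := by
  refine hA.induction_on g (isClosed_eq (by fun_prop) continuous_norm) fun f => ?_
  rw [conjExtend_apply_apply hA hB, hB]

end LinearMap

theorem stmt7_general {H : Type*} [NormedAddCommGroup H] [InnerProductSpace ℂ H] [CompleteSpace H]
    (T : ℝ → H →L[ℂ] H)
    (hT0 : T 0 = 1)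
    (hTsg : ∀ s t : ℝ, 0 ≤ s → 0 ≤ t → T (s + t) = T s ∘L T t)
    (hTcont : ∀ f : H, ContinuousOn (fun t => T t f) (Set.Ici 0))
    (X : H →L[ℂ] H) (hXinj : Function.Injective X)
    (hToe : ∀ t : ℝ, 0 ≤ t → ContinuousLinearMap.adjoint (T t) ∘L X ∘L T t = X)
    (S : H →L[ℂ] H) (hS : S.IsPositive) (hSsq : S ∘L S = X) :
    ∃ Y : ℝ → H →L[ℂ] H,
      Y 0 = 1 ∧
      (∀ s t : ℝ, 0 ≤ s → 0 ≤ t → Y (s + t) = Y s ∘L Y t) ∧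
      (∀ t : ℝ, 0 ≤ t → ∀ f : H, ‖Y t f‖ = ‖f‖) ∧
      (∀ f : H, ContinuousOn (fun t => Y t f) (Set.Ici 0)) ∧
      (∀ t : ℝ, 0 ≤ t → ∀ f : H, Y t (S f) = S (T t f)) := by
  have hSinj : Function.Injective S := .of_comp (f := S) (by rwa [← hSsq, coe_comp] at hXinj)
  have hdense : DenseRange S := hS.isSelfAdjoint.denseRange_of_injective hSinj
  have hTS : ∀ t, 0 ≤ t → ∀ f, ‖S (T t f)‖ = ‖S f‖ := fun t ht =>
    norm_apply_apply_eq_of_adjoint_comp_comp_eq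
      (by rw [hS.isSelfAdjoint.adjoint_eq, hSsq]; exact hToe t ht)
  let Y t : H →L[ℂ] H := LinearMap.conjExtend (S : H →ₗ[ℂ] H) (T t)
  have hY : ∀ t, 0 ≤ t → ∀ f, Y t (S f) = S (T t f) := fun t ht =>
    LinearMap.conjExtend_apply_apply hdense (hTS t ht)
  have hYiso : ∀ t, 0 ≤ t → ∀ g, ‖Y t g‖ = ‖g‖ := fun t ht =>
    LinearMap.norm_conjExtend_apply hdense (hTS t ht)
  refine ⟨Y, ?_, ?_, hYiso, ?_, hY⟩
  · exact ext_of_denseRange hdense fun f => by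
      rw [hY 0 le_rfl, hT0, one_apply_eq_self, one_apply_eq_self]
  · intro s t hs ht
    refine ext_of_denseRange hdense fun f => ?_
    rw [comp_apply, hY _ (add_nonneg hs ht), hY t ht, hY s hs, hTsg s t hs ht, comp_apply]
  · exact ContinuousOn.apply_of_denseRange_of_lipschitzWith (K := 1)
      (fun t ht => (AddMonoidHomClass.isometry_of_norm _ (hYiso t ht)).lipschitz) hdense
      fun f => (S.continuous.comp_continuousOn (hTcont f)).congr fun t ht => hY t ht f

/-- Let `(T t)` be a strongly continuous semigroup of isometries (e.g. the right-shift
semigroup on `L²((0,∞); k)`) and `X` a bounded positive injective operator satisfying the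
Toeplitz condition `T t* X T t = X` for all `t ≥ 0`.  Let `S = √X` be the positive square
root of `X`.  Then the operators `√X ∘ T t ∘ √X⁻¹` (defined on the range of `√X`) are
isometric, and extend to a strongly continuous semigroup `(Y t)` of isometries satisfying
`Y t (√X f) = √X (T t f)`. -/
theorem stmt7 {H : Type*} [NormedAddCommGroup H] [InnerProductSpace ℂ H] [CompleteSpace H]
    (T : ℝ → H →L[ℂ] H)
    (hT0 : T 0 = 1)
    (hTsg : ∀ s t : ℝ, 0 ≤ s → 0 ≤ t → T (s + t) = T s ∘L T t)
    (hTiso : ∀ t : ℝ, 0 ≤ t → ∀ f : H, ‖T t f‖ = ‖f‖)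
    (hTcont : ∀ f : H, ContinuousOn (fun t => T t f) (Set.Ici 0))
    (X : H →L[ℂ] H) (hX : X.IsPositive) (hXinj : Function.Injective X)
    (hToe : ∀ t : ℝ, 0 ≤ t → ContinuousLinearMap.adjoint (T t) ∘L X ∘L T t = X)
    (S : H →L[ℂ] H) (hS : S.IsPositive) (hSsq : S ∘L S = X) :
    ∃ Y : ℝ → H →L[ℂ] H,
      Y 0 = 1 ∧
      (∀ s t : ℝ, 0 ≤ s → 0 ≤ t → Y (s + t) = Y s ∘L Y t) ∧
      (∀ t : ℝ, 0 ≤ t → ∀ f : H, ‖Y t f‖ = ‖f‖) ∧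
      (∀ f : H, ContinuousOn (fun t => Y t f) (Set.Ici 0)) ∧
      (∀ t : ℝ, 0 ≤ t → ∀ f : H, Y t (S f) = S (T t f)) :=
  stmt7_general T hT0 hTsg hTcont X hXinj hToe S hS hSsq
end

section
/- Let X be a bounded positive injective operator on a Hilbert space H and V an isometry with V*XV = X. Then for every f in the domain of √X⁻¹, ‖√X V √X⁻¹ f‖ = ‖f‖. -/
/-! Writing `X = S†S` with `S = √X`, the hypothesis `V†XV = X` says `(SV)†(SV) = S†S`,
and an operator's norms `‖A x‖` are determined by its Gram operator `A†A`. -/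

open ContinuousLinearMap

theorem ContinuousLinearMap.norm_apply_eq_of_adjoint_comp_self_eq {𝕜 E F : Type*} [RCLike 𝕜]
    [NormedAddCommGroup E] [InnerProductSpace 𝕜 E] [CompleteSpace E]
    [NormedAddCommGroup F] [InnerProductSpace 𝕜 F] [CompleteSpace F]
    {A B : E →L[𝕜] F} (h : adjoint A ∘L A = adjoint B ∘L B) (x : E) : ‖A x‖ = ‖B x‖ := by
  rw [apply_norm_eq_sqrt_inner_adjoint_left, h, ← apply_norm_eq_sqrt_inner_adjoint_left]

theorem stmt8_general {H : Type*} [NormedAddCommGroup H] [InnerProductSpace ℂ H] [CompleteSpace H]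
    (X V S : H →L[ℂ] H)
    (hVX : ContinuousLinearMap.adjoint V ∘L X ∘L V = X)
    (hS : S.IsPositive) (hSsq : S ∘L S = X) :
    ∀ g : H, ‖S (V g)‖ = ‖S g‖ := by
  have hX : adjoint S ∘L S = X := by rw [hS.isSelfAdjoint.adjoint_eq, hSsq]
  have hSV : adjoint (S ∘L V) ∘L (S ∘L V) = adjoint S ∘L S := by
    rw [adjoint_comp, comp_assoc, ← comp_assoc (adjoint S), hX, hVX]
  exact norm_apply_eq_of_adjoint_comp_self_eq hSV

/-- Let `X` be a bounded positive injective operator on a Hilbert space, `V` an isometry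
with `V* X V = X`, and `S = √X` the positive square root of `X`.  Then for every `f = S g`
in the domain of `√X⁻¹` (i.e. the range of `S`), `‖√X V √X⁻¹ f‖ = ‖S (V g)‖ = ‖S g‖ = ‖f‖`. -/
theorem stmt8 {H : Type*} [NormedAddCommGroup H] [InnerProductSpace ℂ H] [CompleteSpace H]
    (X V S : H →L[ℂ] H) (hX : X.IsPositive) (hXinj : Function.Injective X)
    (hV : ∀ x : H, ‖V x‖ = ‖x‖)
    (hVX : ContinuousLinearMap.adjoint V ∘L X ∘L V = X)
    (hS : S.IsPositive) (hSsq : S ∘L S = X) :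
    ∀ g : H, ‖S (V g)‖ = ‖S g‖ :=
  stmt8_general X V S hVX hS hSsq
end

section
/- Let (A_n) be a sequence of von Neumann algebras in B(H). Define limsup A_n as the von Neumann algebra generated by all weak operator limits of subsequences T_{n_k} ∈ A_{n_k}, and liminf A_n' as the von Neumann algebra generated by all T ∈ B(H) such that there exist T_n ∈ A_n' with T_n → T and T_n* → T* strongly. Then limsup A_n ⊆ (liminf A_n')'. -/
/-!
Let `S` be a weak-operator limit of `S k ∈ A (φ k)` and `T` a strong* limit of
`T n ∈ (A n)'`. By uniform boundedness the `S k` are bounded, and on bounded sets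
`(S, x, y) ↦ ⟪S x, y⟫` is jointly continuous for the weak operator topology in `S` and the
norm topology in `x, y`. Passing to the limit in
`⟪S k (T (φ k) ξ), η⟫ = ⟪T (φ k) (S k ξ), η⟫ = ⟪S k ξ, T (φ k)† η⟫`
gives `⟪S (T ξ), η⟫ = ⟪S ξ, T† η⟫ = ⟪T (S ξ), η⟫`.
-/

open Filter Topology
open scoped InnerProductSpace

namespace ContinuousLinearMap

variable {H : Type*} [NormedAddCommGroup H] [InnerProductSpace ℂ H]

lemma exists_norm_le_of_tendsto_inner [CompleteSpace H] {S : ℕ → H →L[ℂ] H} {S₀ : H →L[ℂ] H}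
    (hS : ∀ ξ η : H, Tendsto (fun k => ⟪S k ξ, η⟫_ℂ) atTop (𝓝 ⟪S₀ ξ, η⟫_ℂ)) :
    ∃ M, ∀ k, ‖S k‖ ≤ M := by
  apply banach_steinhaus
  intro ξ
  obtain ⟨C, hC⟩ : ∃ C, ∀ k, ‖innerSL ℂ (S k ξ)‖ ≤ C := by
    apply banach_steinhaus
    intro η
    obtain ⟨C, hC⟩ := (hS ξ η).norm.bddAbove_range
    exact ⟨C, fun k => by simpa using hC (Set.mem_range_self k)⟩
  exact ⟨C, fun k => by simpa [innerSL_apply_norm] using hC k⟩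

lemma tendsto_inner_apply_of_norm_le {ι : Type*} {l : Filter ι} {S : ι → H →L[ℂ] H}
    {S₀ : H →L[ℂ] H} {M : ℝ} (hM : ∀ i, ‖S i‖ ≤ M)
    {x y : ι → H} {x₀ y₀ : H}
    (hS : Tendsto (fun i => ⟪S i x₀, y₀⟫_ℂ) l (𝓝 ⟪S₀ x₀, y₀⟫_ℂ))
    (hx : Tendsto x l (𝓝 x₀)) (hy : Tendsto y l (𝓝 y₀)) :
    Tendsto (fun i => ⟪S i (x i), y i⟫_ℂ) l (𝓝 ⟪S₀ x₀, y₀⟫_ℂ) := by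
  have hsplit : ∀ i, ⟪S i (x i), y i⟫_ℂ - ⟪S i x₀, y₀⟫_ℂ
      = ⟪S i (x i - x₀), y i⟫_ℂ + ⟪S i x₀, y i - y₀⟫_ℂ := fun i => by
    simp only [map_sub, inner_sub_left, inner_sub_right]
    ring
  have hbound : ∀ i, ‖⟪S i (x i), y i⟫_ℂ - ⟪S i x₀, y₀⟫_ℂ‖
      ≤ M * ‖x i - x₀‖ * ‖y i‖ + M * ‖x₀‖ * ‖y i - y₀‖ := fun i => by
    have hop : ∀ v, ‖S i v‖ ≤ M * ‖v‖ := fun v =>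
      ((S i).le_opNorm v).trans (by gcongr; exact hM i)
    rw [hsplit]
    refine (norm_add_le _ _).trans (add_le_add ?_ ?_)
    · exact (norm_inner_le_norm _ _).trans (by gcongr; exact hop _)
    · exact (norm_inner_le_norm _ _).trans (by gcongr; exact hop _)
  have hx0 : Tendsto (fun i => ‖x i - x₀‖) l (𝓝 0) := tendsto_iff_norm_sub_tendsto_zero.mp hx
  have hy0 : Tendsto (fun i => ‖y i - y₀‖) l (𝓝 0) := tendsto_iff_norm_sub_tendsto_zero.mp hy
  have hlim : Tendsto (fun i => M * ‖x i - x₀‖ * ‖y i‖ + M * ‖x₀‖ * ‖y i - y₀‖) l (𝓝 0) := by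
    simpa using ((hx0.const_mul M).mul hy.norm).add (hy0.const_mul (M * ‖x₀‖))
  have hdiff := squeeze_zero_norm hbound hlim
  simpa using hdiff.add hS

lemma commute_of_tendsto_inner_of_tendsto_apply [CompleteSpace H] {ι : Type*} {l : Filter ι}
    [l.NeBot]
    {S T : ι → H →L[ℂ] H} {S₀ T₀ : H →L[ℂ] H} {M : ℝ} (hM : ∀ i, ‖S i‖ ≤ M)
    (hS : ∀ ξ η : H, Tendsto (fun i => ⟪S i ξ, η⟫_ℂ) l (𝓝 ⟪S₀ ξ, η⟫_ℂ))
    (hT : ∀ ξ : H, Tendsto (fun i => T i ξ) l (𝓝 (T₀ ξ)))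
    (hT_adjoint : ∀ ξ : H, Tendsto (fun i => adjoint (T i) ξ) l (𝓝 (adjoint T₀ ξ)))
    (hcomm : ∀ i, S i * T i = T i * S i) :
    S₀ * T₀ = T₀ * S₀ := by
  ext ξ
  refine ext_inner_right ℂ fun η => ?_
  have hST : Tendsto (fun i => ⟪S i (T i ξ), η⟫_ℂ) l (𝓝 ⟪S₀ (T₀ ξ), η⟫_ℂ) :=
    tendsto_inner_apply_of_norm_le hM (hS _ _) (hT ξ) tendsto_const_nhds
  have hTS : Tendsto (fun i => ⟪S i (T i ξ), η⟫_ℂ) l (𝓝 ⟪T₀ (S₀ ξ), η⟫_ℂ) := by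
    have hmove : ∀ i, ⟪S i (T i ξ), η⟫_ℂ = ⟪S i ξ, adjoint (T i) η⟫_ℂ := fun i => by
      rw [adjoint_inner_right]
      exact congrArg (⟪·, η⟫_ℂ) (DFunLike.congr_fun (hcomm i) ξ)
    simpa only [hmove, adjoint_inner_right] using
      tendsto_inner_apply_of_norm_le hM (hS _ _) tendsto_const_nhds (hT_adjoint η)
  exact tendsto_nhds_unique hST hTS

end ContinuousLinearMap

open ContinuousLinearMap in
/-- `limsup A n` is encoded as the double commutant of the set of weak-operator limits, and
the commutant of `liminf A n'` as the commutant of its generating set of strong* limits. -/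
theorem stmt9 {H : Type*} [NormedAddCommGroup H] [InnerProductSpace ℂ H] [CompleteSpace H]
    (A : ℕ → VonNeumannAlgebra H) :
    Set.centralizer (Set.centralizer
      {T : H →L[ℂ] H | ∃ φ : ℕ → ℕ, StrictMono φ ∧ ∃ T' : ℕ → H →L[ℂ] H,
        (∀ k, T' k ∈ A (φ k)) ∧
        ∀ ξ η : H, Tendsto (fun k => (inner ℂ (T' k ξ) η : ℂ)) atTop (nhds (inner ℂ (T ξ) η))})
      ⊆ Set.centralizer
      {T : H →L[ℂ] H | ∃ T' : ℕ → H →L[ℂ] H,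
        (∀ n, T' n ∈ (A n).commutant) ∧
        (∀ ξ : H, Tendsto (fun n => T' n ξ) atTop (nhds (T ξ))) ∧
        (∀ ξ : H, Tendsto (fun n => ContinuousLinearMap.adjoint (T' n) ξ) atTop
          (nhds (ContinuousLinearMap.adjoint T ξ)))} := by
  apply Set.centralizer_subset
  rintro T ⟨T', hT'_mem, hT', hT'_adjoint⟩ S ⟨φ, hφ, S', hS'_mem, hS'⟩
  obtain ⟨M, hM⟩ := exists_norm_le_of_tendsto_inner hS'
  exact commute_of_tendsto_inner_of_tendsto_apply hM hS'
    (fun ξ => (hT' ξ).comp hφ.tendsto_atTop) (fun ξ => (hT'_adjoint ξ).comp hφ.tendsto_atTop)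
    (fun k => VonNeumannAlgebra.mem_commutant_iff.mp (hT'_mem (φ k)) (S' k) (hS'_mem k))
end

section
/- Let M be a von Neumann algebra in standard form with cyclic separating vector Ω, modular conjugation J and modular operator Δ, and let α be an E₀-semigroup on M preserving the vacuum state ⟨α_t(m)Ω, Ω⟩ = ⟨mΩ, Ω⟩ with canonical unit S_t defined by S_t mΩ = α_t(m)Ω. If S_t J = J S_t for all t, then Δ^{1/2} S_t ⊇ S_t Δ^{1/2} (i.e. S_t maps the domain of Δ^{1/2} into itself and the operators agree there). -/
/-!
Since `J` is an involution commuting with `S`, and `Δ^{1/2} = J S₀` on the vectors `mΩ`,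
`Δ^{1/2} S mΩ = J α(m*)Ω = J S m*Ω = S J m*Ω = S Δ^{1/2} mΩ`. These vectors form a core for the
closed operator `Δ^{1/2}`, and a closed graph invariant under the continuous map `S × S` on a
subset is invariant on its closure.
-/

open Filter

namespace LinearPMap

variable {R E F : Type*} [CommRing R] [AddCommGroup E] [Module R E] [AddCommGroup F] [Module R F]

theorem exists_mem_domain_eq_of_mem_graph {f : E →ₗ.[R] F} {x : E} {y : F}
    (h : (x, y) ∈ f.graph) : ∃ hx : x ∈ f.domain, f ⟨x, hx⟩ = y :=
  ⟨mem_domain_of_mem_graph h, ((image_iff _).2 h).symm⟩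

theorem IsClosed.map_mem_graph_of_mem_closure [TopologicalSpace E] [TopologicalSpace F]
    {f : E →ₗ.[R] F} (hf : f.IsClosed)
    {g : E → E} {h : F → F} (hg : Continuous g) (hh : Continuous h) {s : Set (E × F)}
    (hs : ∀ p ∈ s, (g p.1, h p.2) ∈ f.graph) {p : E × F} (hp : p ∈ _root_.closure s) :
    (g p.1, h p.2) ∈ f.graph :=
  closure_minimal hs (hf.preimage (hg.prodMap hh)) hp

end LinearPMap

section CanonicalUnit

variable {H : Type*} [NormedAddCommGroup H] [InnerProductSpace ℂ H] [CompleteSpace H]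
  {M : VonNeumannAlgebra H} {Ω : H} {J : H → H} {D : H →ₗ.[ℂ] H}
  {αt : (H →L[ℂ] H) → (H →L[ℂ] H)} {S : H →L[ℂ] H}

theorem canonicalUnit_mem_graph (hJ : Function.Involutive J)
    (hTomita : ∀ m : H →L[ℂ] H, m ∈ M → ∃ h : m Ω ∈ D.domain, J (D ⟨m Ω, h⟩) = (star m) Ω)
    (hα : ∀ m ∈ M, αt m ∈ M) (hαstar : ∀ m ∈ M, αt (star m) = star (αt m))
    (hSdef : ∀ m ∈ M, S (m Ω) = (αt m) Ω) (hSJ : ∀ x : H, S (J x) = J (S x))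
    {m : H →L[ℂ] H} (hm : m ∈ M) {y : H} (hy : (m Ω, y) ∈ D.graph) :
    (S (m Ω), S y) ∈ D.graph := by
  obtain ⟨hdom, hDαm⟩ := hTomita (αt m) (hα m hm)
  obtain ⟨hdom', hDm⟩ := hTomita m hm
  have hy' : y = D ⟨m Ω, hdom'⟩ := (D.image_iff hdom').2 hy
  rw [hSdef m hm]
  refine (D.image_iff hdom).1 ?_
  calc S y = J (S (J y)) := by rw [hSJ, hJ]
    _ = J (S ((star m) Ω)) := by rw [hy', hDm]
    _ = J ((star (αt m)) Ω) := by rw [hSdef _ (star_mem hm), hαstar m hm]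
    _ = D ⟨(αt m) Ω, hdom⟩ := by rw [← hDαm, hJ]

end CanonicalUnit

theorem stmt16_general {H : Type*} [NormedAddCommGroup H] [InnerProductSpace ℂ H] [CompleteSpace H]
    (M : VonNeumannAlgebra H) (Ω : H)
    (J : H →L[ℝ] H) (hJinv : ∀ x : H, J (J x) = x)
    (D : H →ₗ.[ℂ] H) (hDclosed : D.IsClosed)
    (hcore : ∀ x : H, ∀ hx : x ∈ D.domain,
      ∃ (u : ℕ → H →L[ℂ] H) (hu : ∀ n, u n ∈ M) (hud : ∀ n, (u n) Ω ∈ D.domain),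
        Tendsto (fun n => (u n) Ω) atTop (nhds x) ∧
        Tendsto (fun n => D ⟨(u n) Ω, hud n⟩) atTop (nhds (D ⟨x, hx⟩)))
    (hTomita : ∀ m : H →L[ℂ] H, m ∈ M →
      ∃ h : m Ω ∈ D.domain, J (D ⟨m Ω, h⟩) = (star m) Ω)
    (αt : (H →L[ℂ] H) → (H →L[ℂ] H))
    (hα : ∀ m ∈ M, αt m ∈ M)
    (hαstar : ∀ m ∈ M, αt (star m) = star (αt m))
    (S : H →L[ℂ] H)
    (hSdef : ∀ m ∈ M, S (m Ω) = (αt m) Ω)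
    (hSJ : ∀ x : H, S (J x) = J (S x)) :
    ∀ x : H, ∀ hx : x ∈ D.domain,
      ∃ h2 : S x ∈ D.domain, D ⟨S x, h2⟩ = S (D ⟨x, hx⟩) := by
  intro x hx
  obtain ⟨u, hu, hud, hux, hDux⟩ := hcore x hx
  set core : Set (H × H) := {p ∈ D.graph | ∃ m ∈ M, p.1 = m Ω}
  have hx_core : (x, D ⟨x, hx⟩) ∈ closure core :=
    mem_closure_of_tendsto (hux.prodMk_nhds hDux)
      (Eventually.of_forall fun n => ⟨D.mem_graph ⟨_, hud n⟩, u n, hu n, rfl⟩)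
  have hS_core : ∀ p ∈ core, (S p.1, S p.2) ∈ D.graph := by
    rintro ⟨_, y⟩ ⟨hy, m, hm, rfl⟩
    exact canonicalUnit_mem_graph hJinv hTomita hα hαstar hSdef hSJ hm hy
  exact LinearPMap.exists_mem_domain_eq_of_mem_graph
    (hDclosed.map_mem_graph_of_mem_closure S.continuous S.continuous hS_core hx_core)

/-- Tomita–Takesaki commutation for the canonical unit.  Let `M` be a von Neumann algebra
in standard form with cyclic separating vector `Ω`, modular conjugation `J` and modular
operator square root `D = Δ^{1/2}` (a closed densely defined operator with
`J (D (m Ω)) = m* Ω` for `m ∈ M`, for which the vectors `m Ω` form a core).  Let `α_t` be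
a `*`-endomorphism of `M` preserving the vacuum state, with canonical unit `S` determined
by `S (m Ω) = α_t(m) Ω`.  If `S J = J S`, then `Δ^{1/2} S ⊇ S Δ^{1/2}`: `S` maps the
domain of `Δ^{1/2}` into itself and `Δ^{1/2} (S x) = S (Δ^{1/2} x)` there. -/
theorem stmt16 {H : Type*} [NormedAddCommGroup H] [InnerProductSpace ℂ H] [CompleteSpace H]
    (M : VonNeumannAlgebra H) (Ω : H)
    (hcyc : Dense {x : H | ∃ m ∈ M, x = m Ω})
    (hsep : ∀ m : H →L[ℂ] H, m ∈ M → m Ω = 0 → m = 0)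
    (J : H →L[ℝ] H) (hJinv : ∀ x : H, J (J x) = x)
    (hJiso : ∀ x : H, ‖J x‖ = ‖x‖)
    (hJconj : ∀ x : H, J ((Complex.I : ℂ) • x) = -((Complex.I : ℂ) • J x))
    (D : H →ₗ.[ℂ] H) (hDclosed : D.IsClosed)
    (hcore : ∀ x : H, ∀ hx : x ∈ D.domain,
      ∃ (u : ℕ → H →L[ℂ] H) (hu : ∀ n, u n ∈ M) (hud : ∀ n, (u n) Ω ∈ D.domain),
        Tendsto (fun n => (u n) Ω) atTop (nhds x) ∧
        Tendsto (fun n => D ⟨(u n) Ω, hud n⟩) atTop (nhds (D ⟨x, hx⟩)))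
    (hTomita : ∀ m : H →L[ℂ] H, m ∈ M →
      ∃ h : m Ω ∈ D.domain, J (D ⟨m Ω, h⟩) = (star m) Ω)
    (αt : (H →L[ℂ] H) → (H →L[ℂ] H))
    (hα : ∀ m ∈ M, αt m ∈ M)
    (hαstar : ∀ m ∈ M, αt (star m) = star (αt m))
    (hinv : ∀ m ∈ M, (inner ℂ ((αt m) Ω) Ω : ℂ) = inner ℂ (m Ω) Ω)
    (S : H →L[ℂ] H)
    (hSdef : ∀ m ∈ M, S (m Ω) = (αt m) Ω)
    (hSJ : ∀ x : H, S (J x) = J (S x)) :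
    ∀ x : H, ∀ hx : x ∈ D.domain,
      ∃ h2 : S x ∈ D.domain, D ⟨S x, h2⟩ = S (D ⟨x, hx⟩) :=
  stmt16_general M Ω J hJinv D hDclosed hcore hTomita αt hα hαstar S hSdef hSJ
end

section
/- Let R ≥ 1 be a bounded positive operator on a complex Hilbert space k with dense range of R − 1. Consider the real-linear subspace L = {(√R η, j√(1+R) η) : η ∈ k} of k ⊕ k, where j is a conjugation on k. Then the complex linear span of L is dense in k ⊕ k. -/
local notation "⟪" x ", " y "⟫" => @inner ℂ _ _ x y

/-- Let `R ≥ 1` be a bounded positive operator on a complex Hilbert space `k` such that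
`R − 1` has dense range, and let `J` be a conjugation on `k` (an isometric conjugate-linear
involution with `⟪Jx, Jy⟫ = ⟪y, x⟫`).  Let `SR = √R` and `S1R = √(1+R)` be positive square
roots.  Then the complex linear span of the real-linear subspace
`L = {(√R η, J √(1+R) η) : η ∈ k}` is dense in `k ⊕ k`. -/
theorem stmt18 {k : Type*} [NormedAddCommGroup k] [InnerProductSpace ℂ k] [CompleteSpace k]
    (R : k →L[ℂ] k) (hR : R.IsPositive) (hR1 : (R - 1).IsPositive)
    (hden : DenseRange fun x => (R - 1) x)
    (J : k →L[ℝ] k) (hJinv : ∀ x : k, J (J x) = x)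
    (hJconj : ∀ x : k, J ((Complex.I : ℂ) • x) = -((Complex.I : ℂ) • J x))
    (hJinner : ∀ x y : k, ⟪J x, J y⟫ = ⟪y, x⟫)
    (SR S1R : k →L[ℂ] k) (hSR : SR.IsPositive) (hS1R : S1R.IsPositive)
    (hSRsq : SR ∘L SR = R) (hS1Rsq : S1R ∘L S1R = 1 + R) :
    Dense (↑(Submodule.span ℂ {p : k × k | ∃ η : k, p = (SR η, J (S1R η))}) : Set (k × k)) := by
  set S : Set (k × k) := {p : k × k | ∃ η : k, p = (SR η, J (S1R η))} with hSdef
  let e : WithLp 2 (k × k) ≃L[ℂ] k × k := WithLp.prodContinuousLinearEquiv 2 ℂ k k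
  have key : Dense (↑(Submodule.span ℂ (⇑e.symm '' S)) : Set (WithLp 2 (k × k))) := by
    rw [Submodule.dense_iff_topologicalClosure_eq_top,
      Submodule.topologicalClosure_eq_top_iff, Submodule.eq_bot_iff]
    intro x hx
    set a : k := x.fst with ha
    set b : k := x.snd with hb
    have hx' : ∀ η : k, ⟪SR η, a⟫ + ⟪J (S1R η), b⟫ = 0 := by
      intro η
      have hmem : e.symm (SR η, J (S1R η)) ∈ Submodule.span ℂ (⇑e.symm '' S) :=
        Submodule.subset_span ⟨_, ⟨η, rfl⟩, rfl⟩
      have h0 := (Submodule.mem_orthogonal _ _).mp hx _ hmem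
      rw [WithLp.prod_inner_apply] at h0
      simpa [e, ← ha, ← hb] using h0
    have hadj : ∀ u v : k, ⟪SR u, v⟫ = ⟪u, SR v⟫ := fun u v => by
      exact hSR.isSymmetric u v
    have hadj1 : ∀ u v : k, ⟪S1R u, v⟫ = ⟪u, S1R v⟫ := fun u v => by
      exact hS1R.isSymmetric u v
    have hsep : ∀ η : k, ⟪SR η, a⟫ = 0 ∧ ⟪J (S1R η), b⟫ = 0 := by
      intro η
      have h1 := hx' η
      have h2 := hx' ((Complex.I : ℂ) • η)
      rw [map_smul, map_smul, hJconj, inner_smul_left, inner_neg_left,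
        inner_smul_left, Complex.conj_I] at h2
      constructor
      · linear_combination h1 / 2 + Complex.I / 2 * h2 +
          (⟪SR η, a⟫ - ⟪J (S1R η), b⟫) / 2 * Complex.I_mul_I
      · linear_combination h1 / 2 - Complex.I / 2 * h2 +
          (⟪J (S1R η), b⟫ - ⟪SR η, a⟫) / 2 * Complex.I_mul_I
    -- a = 0
    have hSRa : SR a = 0 := by
      have h := (hsep (SR a)).1
      rw [hadj] at h
      exact inner_self_eq_zero.mp h
    have hRa : R a = 0 := by
      rw [← hSRsq]; simp [ContinuousLinearMap.comp_apply, hSRa]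
    have ha0 : a = 0 := by
      have hp := hR1.2 a
      rw [ContinuousLinearMap.reApplyInnerSelf_apply] at hp
      simp only [ContinuousLinearMap.sub_apply, ContinuousLinearMap.one_apply, hRa,
        zero_sub, inner_neg_left, map_neg] at hp
      have hn : RCLike.re ⟪a, a⟫ = ‖a‖ ^ 2 := inner_self_eq_norm_sq (𝕜 := ℂ) a
      have h2 := sq_nonneg ‖a‖
      have : ‖a‖ = 0 := by nlinarith [hp, hn]
      exact norm_eq_zero.mp this
    -- b = 0
    have hS1RJb : S1R (J b) = 0 := by
      have h1 : ⟪J (S1R (S1R (J b))), b⟫ = 0 := (hsep (S1R (J b))).2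
      have h2 : ⟪J (S1R (S1R (J b))), J (J b)⟫ = 0 := by rw [hJinv]; exact h1
      rw [hJinner] at h2
      rw [← hadj1 (J b) (S1R (J b))] at h2
      exact inner_self_eq_zero.mp h2
    have hJb : (1 + R) (J b) = 0 := by
      rw [← hS1Rsq]; simp [ContinuousLinearMap.comp_apply, hS1RJb]
    have hb0 : b = 0 := by
      have hJb0 : J b = 0 := by
        have hp := hR.2 (J b)
        rw [ContinuousLinearMap.reApplyInnerSelf_apply] at hp
        have h0 : ⟪(1 + R) (J b), J b⟫ = 0 := by rw [hJb, inner_zero_left]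
        simp only [ContinuousLinearMap.add_apply, ContinuousLinearMap.one_apply,
          inner_add_left] at h0
        have h0' : RCLike.re (⟪(J b : k), J b⟫ + ⟪R (J b), J b⟫) = 0 := by
          rw [h0]; simp
        rw [map_add] at h0'
        have hn : RCLike.re ⟪(J b : k), J b⟫ = ‖J b‖ ^ 2 := inner_self_eq_norm_sq (𝕜 := ℂ) (J b)
        have h2 := sq_nonneg ‖J b‖
        have : ‖J b‖ = 0 := by nlinarith [hp, hn, h0']
        exact norm_eq_zero.mp this
      have := congrArg J hJb0
      rwa [hJinv, map_zero] at this
    have hex : e x = 0 := Prod.ext ha0 hb0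
    have := congrArg e.symm hex
    simpa using this
  -- transfer density through the continuous linear equiv `e`
  have himg : (Submodule.span ℂ (⇑e.symm '' S)).map (e : WithLp 2 (k × k) →ₗ[ℂ] k × k)
      = Submodule.span ℂ S := by
    rw [Submodule.map_span, Set.image_image]
    simp
  rw [← himg]
  have hcoe : (↑((Submodule.span ℂ (⇑e.symm '' S)).map
        (e : WithLp 2 (k × k) →ₗ[ℂ] k × k)) : Set (k × k))
      = ⇑e.toHomeomorph '' ↑(Submodule.span ℂ (⇑e.symm '' S)) := rfl
  rw [hcoe, e.toHomeomorph.isDenseEmbedding.dense_image]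
  exact key
end
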